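/- Let L/ℚ be a non-Galois cubic field with Galois closure M, σ ∈ Gal(M/ℚ) of order 3, and τ the generator of Gal(M/L). Let ρ₁ be a prime element of O_M over an odd rational prime p splitting completely in M, and set α_i = N_{M/L}(σ^{i−1}ρ₁) for i = 1, 2. Let q ≠ p be an odd rational prime splitting completely in M, 𝔔₁ a prime of O_M over q, and for j = 1, 2, 3 let 𝔓_j be the prime of O_L with 𝔓_j O_M = (σ^{j−1}𝔔₁) · τ(σ^{j−1}𝔔₁). Then the product of quadratic residue symbols ∏_{i=1}^{2} ∏_{j=1}^{3} (α_i/𝔓_j) equals 1. -/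

import Mathlib

/-!
Write `F g` for the residue symbol at `𝔔₁` of the conjugate `g ρ₁`. Since `q` splits completely,
every residue field above `q` is `𝔽_q`, so the residue field of `𝔓_j` is that of `σ^j 𝔔₁`. There
`α_i` factors as `σ^(i-1) ρ₁ · τ σ^(i-1) ρ₁`, neither factor vanishes (both divide `p ≠ q`), and
the symbol is the quadratic character of `𝔽_q`, hence multiplicative; transporting by `σ^(-j)`
gives `(α_i/𝔓_j) = F(σ^(-j) σ^(i-1)) · F(σ^(-j) τ σ^(i-1))`. The subgroup `⟨σ⟩` has index two,
hence is normal, so `τσ ∈ ⟨σ⟩τ`: the twelve arguments run twice through `⟨σ⟩` and twice through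
`⟨σ⟩τ`, and as `F = ±1` the product is `1`.
-/

open NumberField Module

-- The quadratic residue symbol of `x` at the prime ideal `P`:
-- `1` if `x` is a square in the residue ring `R ⧸ P`, and `-1` otherwise.
open scoped Classical in
noncomputable def legSym {R : Type*} [CommRing R] (x : R) (P : Ideal R) : ℤ :=
  if ∃ y : R, x - y ^ 2 ∈ P then 1 else -1

/-- `p` splits completely in the number field `K`. -/
def SplitsCompletelyIn (K : Type*) [Field K] [NumberField K] (p : ℕ) : Prop :=
  {P : Ideal (𝓞 K) | P.IsPrime ∧ (p : 𝓞 K) ∈ P}.ncard = Module.finrank ℚ K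

/-- The image of an ideal of `𝓞 M` under the automorphism of `𝓞 M` induced by a
field automorphism of `M`. -/
noncomputable def galMapIdeal {M : Type*} [Field M] [NumberField M] (σ : M ≃ₐ[ℚ] M)
    (I : Ideal (𝓞 M)) : Ideal (𝓞 M) :=
  Ideal.map (galRestrict ℤ ℚ M (𝓞 M) σ) I

theorem Ideal.exists_natCast_sub_mem_of_natCard_quotient {S : Type*} [CommRing S] {Q : Ideal S}
    {q : ℕ} (hq : q.Prime) (hQ : Nat.card (S ⧸ Q) = q) (z : S) : ∃ n : ℕ, z - n ∈ Q := by
  have : Finite (S ⧸ Q) := Nat.finite_of_card_ne_zero (hQ ▸ hq.ne_zero)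
  let := Fintype.ofFinite (S ⧸ Q)
  have : NeZero q := ⟨hq.ne_zero⟩
  let e := ZMod.ringEquivOfPrime (S ⧸ Q) hq (by rw [← Nat.card_eq_fintype_card, hQ])
  obtain ⟨n, hn⟩ := ZMod.natCast_zmod_surjective (e.symm (Ideal.Quotient.mk Q z))
  refine ⟨n, Ideal.Quotient.eq.mp ?_⟩
  rw [map_natCast, ← map_natCast e, hn, e.apply_symm_apply]

theorem Ideal.notMem_of_dvd_natCast {S : Type*} [CommRing S] {p q : ℕ} (hpq : p.Coprime q)
    {ρ : S} (hρ : ρ ∣ p) {Q : Ideal S} (hQ : Q ≠ ⊤) (hqQ : (q : S) ∈ Q) : ρ ∉ Q := by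
  intro hρQ
  obtain ⟨u, v, huv⟩ := (Nat.isCoprime_iff_coprime.mpr hpq).map (Int.castRingHom S)
  simp only [eq_intCast, Int.cast_natCast] at huv
  exact hQ ((Q.eq_top_iff_one).mpr (huv ▸ Q.add_mem (Q.mul_mem_left u (Q.mem_of_dvd hρ hρQ))
    (Q.mul_mem_left v hqQ)))

section ResidueSymbol

variable {R : Type*} [CommRing R]

theorem legSym_mul_self (x : R) (P : Ideal R) : legSym x P * legSym x P = 1 := by
  unfold legSym
  split_ifs <;> norm_num

open scoped Classical in
theorem legSym_eq_ite_isSquare (x : R) (P : Ideal R) :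
    legSym x P = if IsSquare (Ideal.Quotient.mk P x) then 1 else -1 := by
  refine if_congr ⟨fun ⟨y, hy⟩ => ⟨Ideal.Quotient.mk P y, ?_⟩, fun ⟨r, hr⟩ => ?_⟩ rfl rfl
  · rw [← sq, ← map_pow, Ideal.Quotient.eq.mpr hy]
  · obtain ⟨y, rfl⟩ := Ideal.Quotient.mk_surjective r
    exact ⟨y, Ideal.Quotient.eq.mp (by rw [hr, map_pow, sq])⟩

theorem legSym_eq_quadraticChar (P : Ideal R) [P.IsMaximal] [Fintype (R ⧸ P)]
    [DecidableEq (R ⧸ P)] {x : R} (hx : x ∉ P) :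
    letI := Ideal.Quotient.field P
    legSym x P = quadraticChar (R ⧸ P) (Ideal.Quotient.mk P x) := by
  let := Ideal.Quotient.field P
  have hx0 : Ideal.Quotient.mk P x ≠ 0 := by rwa [ne_eq, Ideal.Quotient.eq_zero_iff_mem]
  classical
  rw [legSym_eq_ite_isSquare]
  split_ifs with h
  · exact ((quadraticChar_one_iff_isSquare hx0).mpr h).symm
  · exact (quadraticChar_neg_one_iff_not_isSquare.mpr h).symm

theorem legSym_mul (P : Ideal R) [P.IsMaximal] [Finite (R ⧸ P)] {x y : R} (hx : x ∉ P)
    (hy : y ∉ P) : legSym (x * y) P = legSym x P * legSym y P := by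
  classical
  let := Ideal.Quotient.field P
  let := Fintype.ofFinite (R ⧸ P)
  rw [legSym_eq_quadraticChar P hx, legSym_eq_quadraticChar P hy,
    legSym_eq_quadraticChar P (Ideal.IsPrime.mul_notMem inferInstance hx hy), map_mul, map_mul]

theorem legSym_map_equiv {S E : Type*} [CommRing S] [EquivLike E R S] [RingEquivClass E R S]
    (e : E) (x : R) (P : Ideal R) : legSym (e x) (P.map e) = legSym x P := by
  classical
  unfold legSym
  refine if_congr ?_ rfl rfl
  rw [(EquivLike.surjective e).exists]
  simp only [← map_pow, ← map_sub, Ideal.mem_map_of_equiv, EmbeddingLike.apply_eq_iff_eq,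
    exists_eq_right]

theorem legSym_eq_of_comap_eq {S : Type*} [CommRing S] (f : R →+* S)
    {P : Ideal R} {Q : Ideal S} (hPQ : Q.comap f = P) (hQ : ∀ z : S, ∃ n : ℕ, z - n ∈ Q)
    (x : R) : legSym x P = legSym (f x) Q := by
  classical
  unfold legSym
  refine if_congr ⟨fun ⟨y, hy⟩ => ⟨f y, ?_⟩, fun ⟨z, hz⟩ => ?_⟩ rfl rfl
  · rw [← map_pow, ← map_sub, ← Ideal.mem_comap, hPQ]
    exact hy
  · obtain ⟨n, hn⟩ := hQ z
    refine ⟨n, hPQ ▸ Ideal.mem_comap.mpr ?_⟩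
    have : f x - n ^ 2 = (f x - z ^ 2) + (z - n) * (z + n) := by ring
    rw [map_sub, map_pow, map_natCast, this]
    exact Q.add_mem hz (Q.mul_mem_right _ hn)

end ResidueSymbol

theorem primesOver_span_natCast_eq {S : Type*} [CommRing S] {q : ℕ} (hq : q.Prime) :
    (Ideal.span {(q : ℤ)}).primesOver S = {P : Ideal S | P.IsPrime ∧ (q : S) ∈ P} := by
  ext P
  refine and_congr_right fun hP => ?_
  rw [Ideal.liesOver_span_iff hP.ne_top (Nat.prime_iff_prime_int.mp hq), map_natCast]

section SplitsCompletely

variable {K : Type*} [Field K] [NumberField K] {q : ℕ}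

theorem SplitsCompletelyIn.inertiaDeg_eq_one (hq : q.Prime) (h : SplitsCompletelyIn K q)
    {Q : Ideal (𝓞 K)} [Q.IsPrime]     [Q.LiesOver (Ideal.span {(q : ℤ)})] : Q.inertiaDeg ℤ = 1 := by
  set p := Ideal.span {(q : ℤ)}
  have : p.IsPrime := (Ideal.span_singleton_prime (by exact_mod_cast hq.ne_zero)).mpr
    (Nat.prime_iff_prime_int.mp hq)
  let := (Algebra.QuasiFinite.finite_primesOver p (S := 𝓞 K)).fintype
  have hcard : Fintype.card (p.primesOver (𝓞 K)) = Module.finrank ℤ (𝓞 K) := by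
    rw [RingOfIntegers.rank, ← h, ← primesOver_span_natCast_eq hq, Set.ncard_eq_toFinset_card',
      Set.toFinset_card]
  have hsum := Ideal.sum_ramification_inertia_eq_finrank p (𝓞 K)
  rw [← hcard, Fintype.card_eq_sum_ones, eq_comm, Finset.sum_eq_sum_iff_of_le] at hsum
  · exact Nat.eq_one_of_mul_eq_one_left
      (hsum ⟨Q, inferInstance, inferInstance⟩ (Finset.mem_univ _)).symm
  · intro P _
    exact Nat.mul_pos (P.1.ramificationIdx_pos ℤ) (P.1.inertiaDeg_pos ℤ)

theorem SplitsCompletelyIn.natCard_quotient (hq : q.Prime) (h : SplitsCompletelyIn K q)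
    {Q : Ideal (𝓞 K)} (hQ : Q.IsPrime) (hqQ : (q : 𝓞 K) ∈ Q) : Nat.card (𝓞 K ⧸ Q) = q := by
  have : Q.LiesOver (Ideal.span {(q : ℤ)}) := by
    rwa [Ideal.liesOver_span_iff hQ.ne_top (Nat.prime_iff_prime_int.mp hq), map_natCast]
  rw [← Submodule.cardQuot_apply, ← Ideal.absNorm_apply,
    ← Ideal.absNorm_pow_inertiaDeg (Ideal.span {(q : ℤ)}), h.inertiaDeg_eq_one hq, pow_one,
    Ideal.absNorm_span_singleton]
  simp

end SplitsCompletely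

section GaloisConjugates

variable {M : Type*} [Field M] [NumberField M]

theorem mem_galMapIdeal_iff (g : M ≃ₐ[ℚ] M) (I : Ideal (𝓞 M)) (x : 𝓞 M) :
    x ∈ galMapIdeal g I ↔ galRestrict ℤ ℚ M (𝓞 M) g⁻¹ x ∈ I := by
  rw [galMapIdeal, Ideal.mem_map_of_equiv, map_inv]
  exact ⟨fun ⟨y, hy, hyx⟩ => hyx ▸ by simpa using hy, fun h => ⟨_, h, by simp⟩⟩

theorem legSym_galMapIdeal (g : M ≃ₐ[ℚ] M) (x : 𝓞 M) (I : Ideal (𝓞 M)) :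
    legSym x (galMapIdeal g I) = legSym (galRestrict ℤ ℚ M (𝓞 M) g⁻¹ x) I := by
  conv_lhs => rw [← (galRestrict ℤ ℚ M (𝓞 M) g).apply_symm_apply x]
  rw [galMapIdeal, legSym_map_equiv, map_inv]
  rfl

end GaloisConjugates

section Evaluation

variable {L M : Type*} [Field L] [Field M] [NumberField L] [NumberField M] [Algebra L M]
  {q : ℕ}

theorem legSym_eq_mul_of_map_eq_mul (hq : q.Prime) (hsplit : SplitsCompletelyIn M q)
    {P : Ideal (𝓞 L)} (hP : P.IsPrime) {Q Q' : Ideal (𝓞 M)}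
    (hQ : Q.IsPrime) (hqQ : (q : 𝓞 M) ∈ Q) (hqQ' : (q : 𝓞 M) ∈ Q')
    (hPQ : P.map (algebraMap (𝓞 L) (𝓞 M)) = Q * Q') {x : 𝓞 L} {y z : 𝓞 M}
    (hx : algebraMap (𝓞 L) (𝓞 M) x = y * z) (hy : y ∉ Q) (hz : z ∉ Q) :
    legSym x P = legSym y Q * legSym z Q := by
  have hq0 : (q : 𝓞 M) ≠ 0 := by exact_mod_cast hq.ne_zero
  have hPbot : P ≠ ⊥ := by
    rintro rfl
    rw [Ideal.map_bot] at hPQ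
    exact mul_ne_zero hq0 hq0 (Ideal.mem_bot.mp (hPQ ▸ Ideal.mul_mem_mul hqQ hqQ'))
  have hPmax := hP.isMaximal hPbot
  have := hQ.isMaximal fun h => hq0 (Ideal.mem_bot.mp (h ▸ hqQ))
  have hcard := hsplit.natCard_quotient hq hQ hqQ
  have : Finite (𝓞 M ⧸ Q) := Nat.finite_of_card_ne_zero (hcard ▸ hq.ne_zero)
  have hcomap : Q.comap (algebraMap (𝓞 L) (𝓞 M)) = P :=
    (hPmax.eq_of_le (Ideal.comap_ne_top _ hQ.ne_top)
      (Ideal.map_le_iff_le_comap.mp (hPQ ▸ Ideal.mul_le_left))).symm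
  rw [legSym_eq_of_comap_eq _ hcomap (Q.exists_natCast_sub_mem_of_natCard_quotient hq hcard),
    hx, legSym_mul Q hy hz]

theorem legSym_eq_mul_of_map_eq_galMapIdeal_mul (hq : q.Prime)
    (hsplit : SplitsCompletelyIn M q) {𝔔 : Ideal (𝓞 M)} (h𝔔 : 𝔔.IsPrime)
    (hq𝔔 : (q : 𝓞 M) ∈ 𝔔) {ρ : 𝓞 M} (hρ : ∀ g, galRestrict ℤ ℚ M (𝓞 M) g ρ ∉ 𝔔)
    (s τ g : M ≃ₐ[ℚ] M) {P : Ideal (𝓞 L)} (hP : P.IsPrime)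
    (hPQ : P.map (algebraMap (𝓞 L) (𝓞 M)) = galMapIdeal s 𝔔 * galMapIdeal τ (galMapIdeal s 𝔔))
    {x : 𝓞 L} (hx : algebraMap (𝓞 L) (𝓞 M) x =
      galRestrict ℤ ℚ M (𝓞 M) g ρ * galRestrict ℤ ℚ M (𝓞 M) (τ * g) ρ) :
    legSym x P = legSym (galRestrict ℤ ℚ M (𝓞 M) (s⁻¹ * g) ρ) 𝔔 *
      legSym (galRestrict ℤ ℚ M (𝓞 M) (s⁻¹ * (τ * g)) ρ) 𝔔 := by
  have hmem (t : M ≃ₐ[ℚ] M) (I : Ideal (𝓞 M)) (hI : (q : 𝓞 M) ∈ I) :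
      (q : 𝓞 M) ∈ galMapIdeal t I := by
    rwa [mem_galMapIdeal_iff, map_natCast]
  have hconj (h : M ≃ₐ[ℚ] M) : galRestrict ℤ ℚ M (𝓞 M) s⁻¹ (galRestrict ℤ ℚ M (𝓞 M) h ρ) =
      galRestrict ℤ ℚ M (𝓞 M) (s⁻¹ * h) ρ := by
    rw [map_mul, AlgEquiv.mul_apply]
  rw [legSym_eq_mul_of_map_eq_mul hq hsplit hP (Q := galMapIdeal s 𝔔)
      (Ideal.map_isPrime_of_equiv _) (hmem s 𝔔 hq𝔔) (hmem τ _ (hmem s 𝔔 hq𝔔)) hPQ hx,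
    legSym_galMapIdeal, legSym_galMapIdeal, hconj, hconj]
  all_goals rw [mem_galMapIdeal_iff, hconj]; exact hρ _

end Evaluation

section SignProducts

variable {G : Type*} [Group G]

theorem exists_mul_eq_pow_mul_of_index_zpowers_eq_two [Finite G] {σ : G}
    (hσ : (Subgroup.zpowers σ).index = 2) (τ : G) : ∃ n : ℕ, τ * σ = σ ^ n * τ := by
  have := Subgroup.normal_of_index_eq_two hσ
  obtain ⟨n, hn : σ ^ n = _⟩ := mem_powers_iff_mem_zpowers.mpr
    (this.conj_mem σ (Subgroup.mem_zpowers σ) τ)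
  exact ⟨n, by rw [hn, inv_mul_cancel_right]⟩

variable {R : Type*} [CommMonoid R] (F : G → R) {σ : G}

theorem prod_fin_three_inv_pow_mul_mul_left (hσ : σ ^ 3 = 1) (h : G) :
    ∏ j : Fin 3, F ((σ ^ (j : ℕ))⁻¹ * (σ * h)) = ∏ j : Fin 3, F ((σ ^ (j : ℕ))⁻¹ * h) := by
  have hσ2 : (σ ^ 2)⁻¹ = σ := inv_eq_of_mul_eq_one_left (by rw [← pow_succ', hσ])
  have hσ2σ : (σ ^ 2)⁻¹ * (σ * h) = σ⁻¹ * h := by group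
  simp only [Fin.prod_univ_three, Fin.val_zero, Fin.val_one, Fin.val_two, pow_zero, inv_one,
    one_mul, pow_one, inv_mul_cancel_left]
  rw [hσ2σ, hσ2, mul_rotate]

theorem prod_fin_three_inv_pow_mul_pow_mul (hσ : σ ^ 3 = 1) (n : ℕ) (h : G) :
    ∏ j : Fin 3, F ((σ ^ (j : ℕ))⁻¹ * (σ ^ n * h)) = ∏ j : Fin 3, F ((σ ^ (j : ℕ))⁻¹ * h) := by
  induction n with
  | zero => rw [pow_zero, one_mul]
  | succ n ih => rw [pow_succ', mul_assoc, prod_fin_three_inv_pow_mul_mul_left F hσ, ih]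

theorem prod_mul_prod_mul_left_eq_one (hF : ∀ g, F g * F g = 1) (hσ : σ ^ 3 = 1) {τ : G}
    {n : ℕ} (hτσ : τ * σ = σ ^ n * τ) (g : G) :
    (∏ j : Fin 3, F ((σ ^ (j : ℕ))⁻¹ * g) * F ((σ ^ (j : ℕ))⁻¹ * (τ * g))) *
      ∏ j : Fin 3, F ((σ ^ (j : ℕ))⁻¹ * (σ * g)) * F ((σ ^ (j : ℕ))⁻¹ * (τ * (σ * g))) = 1 := by
  have hsq (h : G) :
      (∏ j : Fin 3, F ((σ ^ (j : ℕ))⁻¹ * h)) * ∏ j : Fin 3, F ((σ ^ (j : ℕ))⁻¹ * h) = 1 := by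
    rw [← Finset.prod_mul_distrib]
    exact Finset.prod_eq_one fun j _ => hF _
  simp only [Finset.prod_mul_distrib]
  rw [← mul_assoc τ σ g, hτσ, mul_assoc (σ ^ n) τ g, prod_fin_three_inv_pow_mul_mul_left F hσ,
    prod_fin_three_inv_pow_mul_pow_mul F hσ, mul_mul_mul_comm, hsq, hsq, one_mul]

end SignProducts

theorem stmt8_general (L M : Type*) [Field L] [Field M] [NumberField L] [NumberField M]
    [Algebra L M]
    (hMGal : IsGalois ℚ M) (hM6 : finrank ℚ M = 6)
    (σ τ : M ≃ₐ[ℚ] M) (hσ : orderOf σ = 3)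
    (p : ℕ) (hp : p.Prime)
    (ρ₁ : 𝓞 M) (hρp : (p : 𝓞 M) ∈ Ideal.span {ρ₁})
    -- αᵢ = N_{M/L}(σ^{i-1} ρ₁) = (σ^{i-1} ρ₁) · (τ σ^{i-1} ρ₁) ∈ 𝓞 L, for i = 1, 2
    (α₁ α₂ : 𝓞 L)
    (hα₁ : algebraMap L M (algebraMap (𝓞 L) L α₁) =
      algebraMap (𝓞 M) M ρ₁ * τ (algebraMap (𝓞 M) M ρ₁))
    (hα₂ : algebraMap L M (algebraMap (𝓞 L) L α₂) =
      σ (algebraMap (𝓞 M) M ρ₁) * τ (σ (algebraMap (𝓞 M) M ρ₁)))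
    (q : ℕ) (hq : q.Prime) (hqp : q ≠ p) (hqsplit : SplitsCompletelyIn M q)
    -- 𝔔₁ a prime of 𝓞 M over q, and 𝔓_j the prime of 𝓞 L with
    -- 𝔓_j 𝓞 M = (σ^{j-1} 𝔔₁) · τ(σ^{j-1} 𝔔₁)
    (𝔔₁ : Ideal (𝓞 M)) (h𝔔₁prime : 𝔔₁.IsPrime) (h𝔔₁q : (q : 𝓞 M) ∈ 𝔔₁)
    (𝔓 : Fin 3 → Ideal (𝓞 L)) (h𝔓prime : ∀ j, (𝔓 j).IsPrime)
    (h𝔓 : ∀ j : Fin 3, Ideal.map (algebraMap (𝓞 L) (𝓞 M)) (𝔓 j) =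
      galMapIdeal (σ ^ (j : ℕ)) 𝔔₁ * galMapIdeal τ (galMapIdeal (σ ^ (j : ℕ)) 𝔔₁)) :
    (∏ j : Fin 3, legSym α₁ (𝔓 j)) * (∏ j : Fin 3, legSym α₂ (𝔓 j)) = 1 := by
  set conj := fun g : M ≃ₐ[ℚ] M => galRestrict ℤ ℚ M (𝓞 M) g ρ₁
  have hindex : (Subgroup.zpowers σ).index = 2 := by
    have := (Subgroup.zpowers σ).card_mul_index
    rw [Nat.card_zpowers, hσ, IsGalois.card_aut_eq_finrank, hM6] at this
    omega
  obtain ⟨n, hτσ⟩ := exists_mul_eq_pow_mul_of_index_zpowers_eq_two hindex τ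
  have hρ (g : M ≃ₐ[ℚ] M) : conj g ∉ 𝔔₁ :=
    Ideal.notMem_of_dvd_natCast ((Nat.coprime_primes hp hq).mpr hqp.symm)
      (by simpa using map_dvd (galRestrict ℤ ℚ M (𝓞 M) g) (Ideal.mem_span_singleton.mp hρp))
      h𝔔₁prime.ne_top h𝔔₁q
  have hα (g : M ≃ₐ[ℚ] M) (α : 𝓞 L)
      (h : algebraMap L M (algebraMap (𝓞 L) L α) = g ρ₁ * τ (g ρ₁)) :
      algebraMap (𝓞 L) (𝓞 M) α = conj g * conj (τ * g) := by
    apply RingOfIntegers.coe_injective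
    simp [← IsScalarTower.algebraMap_apply, IsScalarTower.algebraMap_apply (𝓞 L) L M, h, conj,
      algebraMap_galRestrict_apply]
  have hleg (g : M ≃ₐ[ℚ] M) (α : 𝓞 L) (h : algebraMap (𝓞 L) (𝓞 M) α = conj g * conj (τ * g))
      (j : Fin 3) : legSym α (𝔓 j) = legSym (conj ((σ ^ (j : ℕ))⁻¹ * g)) 𝔔₁ *
        legSym (conj ((σ ^ (j : ℕ))⁻¹ * (τ * g))) 𝔔₁ :=
    legSym_eq_mul_of_map_eq_galMapIdeal_mul hq hqsplit h𝔔₁prime h𝔔₁q hρ _ τ g (h𝔓prime j) (h𝔓 j) h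
  simp only [hleg 1 α₁ (hα 1 α₁ hα₁), hleg σ α₂ (hα σ α₂ hα₂)]
  simpa only [mul_one] using prod_mul_prod_mul_left_eq_one (fun g => legSym (conj g) 𝔔₁)
    (fun g => legSym_mul_self _ _) (by rw [← hσ, pow_orderOf_eq_one]) hτσ 1

theorem stmt8 (L M : Type*) [Field L] [Field M] [NumberField L] [NumberField M]
    [Algebra L M] [IsScalarTower ℚ L M]
    (hL3 : finrank ℚ L = 3) (hLnG : ¬ IsGalois ℚ L)
    (hMGal : IsGalois ℚ M) (hM6 : finrank ℚ M = 6)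
    (σ τ : M ≃ₐ[ℚ] M) (hσ : orderOf σ = 3) (hτ : orderOf τ = 2)
    (hτL : ∀ x : L, τ (algebraMap L M x) = algebraMap L M x)
    (p : ℕ) (hp : p.Prime) (hpodd : p ≠ 2) (hpsplit : SplitsCompletelyIn M p)
    (ρ₁ : 𝓞 M) (hρprime : Prime ρ₁) (hρp : (p : 𝓞 M) ∈ Ideal.span {ρ₁})
    -- αᵢ = N_{M/L}(σ^{i-1} ρ₁) = (σ^{i-1} ρ₁) · (τ σ^{i-1} ρ₁) ∈ 𝓞 L, for i = 1, 2
    (α₁ α₂ : 𝓞 L)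
    (hα₁ : algebraMap L M (algebraMap (𝓞 L) L α₁) =
      algebraMap (𝓞 M) M ρ₁ * τ (algebraMap (𝓞 M) M ρ₁))
    (hα₂ : algebraMap L M (algebraMap (𝓞 L) L α₂) =
      σ (algebraMap (𝓞 M) M ρ₁) * τ (σ (algebraMap (𝓞 M) M ρ₁)))
    (q : ℕ) (hq : q.Prime) (hqodd : q ≠ 2) (hqp : q ≠ p) (hqsplit : SplitsCompletelyIn M q)
    -- 𝔔₁ a prime of 𝓞 M over q, and 𝔓_j the prime of 𝓞 L with
    -- 𝔓_j 𝓞 M = (σ^{j-1} 𝔔₁) · τ(σ^{j-1} 𝔔₁)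
    (𝔔₁ : Ideal (𝓞 M)) (h𝔔₁prime : 𝔔₁.IsPrime) (h𝔔₁q : (q : 𝓞 M) ∈ 𝔔₁)
    (𝔓 : Fin 3 → Ideal (𝓞 L)) (h𝔓prime : ∀ j, (𝔓 j).IsPrime)
    (h𝔓 : ∀ j : Fin 3, Ideal.map (algebraMap (𝓞 L) (𝓞 M)) (𝔓 j) =
      galMapIdeal (σ ^ (j : ℕ)) 𝔔₁ * galMapIdeal τ (galMapIdeal (σ ^ (j : ℕ)) 𝔔₁)) :
    (∏ j : Fin 3, legSym α₁ (𝔓 j)) * (∏ j : Fin 3, legSym α₂ (𝔓 j)) = 1 :=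
  stmt8_general L M hMGal hM6 σ τ hσ p hp ρ₁ hρp α₁ α₂ hα₁ hα₂ q hq hqp hqsplit 𝔔₁ h𝔔₁prime h𝔔₁q 𝔓
    h𝔓prime h𝔓
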